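/- arXiv:2005.02448 — 3 statements merged into one kernel-verified Lean document; each statement's English description precedes it below -/
import Mathlib

section
/- Let q be a prime power, n a positive integer with gcd(n,q)=1, and let x^n - 1 = p_1 p_2 ... p_r be the factorization of x^n - 1 into monic irreducible factors over F_q. Let τ denote the Frobenius map α ↦ α^q on F_{q^n}, and for each l let W_l = {α ∈ F_{q^n} : p_l(τ)(α) = 0}. Then F_{q^n} = W_1 ⊕ ... ⊕ W_r as F_q-vector spaces, and each W_l has dimension deg p_l over F_q. -/
/-!
The Frobenius `τ : x ↦ x ^ q` is a `K`-linear endomorphism of `L` of order `n = [L : K]`, so it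
is annihilated by `X ^ n - 1 = ∏ pₗ`. Since `gcd(n, q) = 1` this polynomial is separable, hence
the `pₗ` are pairwise coprime and the primary decomposition splits `L` into the kernels `Wₗ` of
the `pₗ(τ)`. Every element of `Wₗ` is a root of the linearized polynomial `∑ aᵢ X ^ (q ^ i)` of
`pₗ = ∑ aᵢ X ^ i`, which has degree `q ^ deg pₗ`; so `q ^ dim Wₗ = |Wₗ| ≤ q ^ deg pₗ`. As both
`dim Wₗ` and `deg pₗ` sum to `n`, all these inequalities are equalities.
-/

open Polynomial Module DirectSum FiniteField
open scoped Function

section Linearized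

variable {R : Type*} [CommSemiring R]

noncomputable def linearizedPoly (q : ℕ) (g : R[X]) : R[X] :=
  ∑ i ∈ Finset.range (g.natDegree + 1), C (g.coeff i) * X ^ q ^ i

theorem coeff_linearizedPoly_pow_natDegree {q : ℕ} (hq : 2 ≤ q) (g : R[X]) :
    (linearizedPoly q g).coeff (q ^ g.natDegree) = g.leadingCoeff := by
  rw [linearizedPoly, finsetSum_coeff, Finset.sum_eq_single g.natDegree]
  · rw [coeff_C_mul_X_pow, if_pos rfl, leadingCoeff]
  · intro i _ hi
    rw [coeff_C_mul_X_pow, if_neg fun h => hi (Nat.pow_right_injective hq h).symm]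
  · simp

theorem linearizedPoly_ne_zero {q : ℕ} (hq : 2 ≤ q) {g : R[X]} (hg : g ≠ 0) :
    linearizedPoly q g ≠ 0 := fun h => leadingCoeff_ne_zero.mpr hg <| by
  rw [← coeff_linearizedPoly_pow_natDegree hq, h, coeff_zero]

theorem natDegree_linearizedPoly_le {q : ℕ} (hq : 0 < q) (g : R[X]) :
    (linearizedPoly q g).natDegree ≤ q ^ g.natDegree := by
  refine natDegree_sum_le_of_forall_le _ _ fun i hi => (natDegree_C_mul_X_pow_le _ _).trans ?_
  exact Nat.pow_le_pow_right hq (Nat.lt_succ_iff.mp (Finset.mem_range.mp hi))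

theorem aeval_linearizedPoly {A : Type*} [Semiring A] [Algebra R A] (q : ℕ) (g : R[X]) (x : A) :
    aeval x (linearizedPoly q g) =
      ∑ i ∈ Finset.range (g.natDegree + 1), g.coeff i • x ^ q ^ i := by
  simp [linearizedPoly, map_sum, Algebra.smul_def]

end Linearized

section KernelDecomposition

variable {R M ι : Type*} [CommRing R] [AddCommGroup M] [Module R M] (f : Module.End R M)

theorem ker_aeval_prod_eq_iSup_ker_aeval {P : ι → R[X]} (hP : Pairwise (IsCoprime on P))
    (s : Finset ι) :
    LinearMap.ker (aeval f (∏ i ∈ s, P i)) = ⨆ i ∈ s, LinearMap.ker (aeval f (P i)) := by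
  classical
  induction s using Finset.induction_on with
  | empty => simp [Module.End.one_eq_id]
  | @insert a s ha ih =>
    have hco : IsCoprime (P a) (∏ i ∈ s, P i) :=
      IsCoprime.prod_right fun i hi => hP fun h => ha (h ▸ hi)
    rw [Finset.prod_insert ha, ← sup_ker_aeval_eq_ker_aeval_mul_of_coprime f hco, ih,
      Finset.iSup_insert]

theorem isInternal_ker_aeval_of_pairwise_isCoprime [Fintype ι] [DecidableEq ι] {P : ι → R[X]}
    (hP : Pairwise (IsCoprime on P)) (hf : aeval f (∏ i, P i) = 0) :
    IsInternal fun i => LinearMap.ker (aeval f (P i)) := by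
  refine (isInternal_submodule_iff_iSupIndep_and_iSup_eq_top _).mpr ⟨fun i => ?_, ?_⟩
  · have hco : IsCoprime (P i) (∏ j ∈ Finset.univ.erase i, P j) :=
      IsCoprime.prod_right fun j hj => hP (Finset.ne_of_mem_erase hj).symm
    have hdisj := disjoint_ker_aeval_of_isCoprime f hco
    rw [ker_aeval_prod_eq_iSup_ker_aeval f hP] at hdisj
    refine hdisj.mono_right (iSup₂_le fun j hj => ?_)
    exact le_iSup₂ (f := fun j (_ : j ∈ Finset.univ.erase i) => LinearMap.ker (aeval f (P j))) j
      (Finset.mem_erase.2 ⟨hj, Finset.mem_univ j⟩)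
  · simpa [hf] using (ker_aeval_prod_eq_iSup_ker_aeval f hP Finset.univ).symm

end KernelDecomposition

theorem DirectSum.IsInternal.finrank_eq_of_le {K V ι : Type*} [Field K] [AddCommGroup V]
    [Module K V] [FiniteDimensional K V] [Fintype ι] [DecidableEq ι] {W : ι → Submodule K V}
    (hW : IsInternal W) {d : ι → ℕ} (hd : ∑ i, d i = finrank K V)
    (hle : ∀ i, finrank K (W i) ≤ d i) (i : ι) : finrank K (W i) = d i := by
  have hsum : ∑ i, finrank K (W i) = ∑ i, d i := by
    rw [hd, ← finrank_directSum, (LinearEquiv.ofBijective (coeLinearMap W) hW).finrank_eq]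
  exact (Finset.sum_eq_sum_iff_of_le fun i _ => hle i).mp hsum i (Finset.mem_univ i)

theorem pairwise_isCoprime_of_squarefree_prod {R ι : Type*} [CommRing R] [IsDomain R]
    [IsPrincipalIdealRing R] [Fintype ι] {P : ι → R} (hirr : ∀ i, Irreducible (P i))
    (hsq : Squarefree (∏ i, P i)) : Pairwise (IsCoprime on P) := by
  classical
  intro i j hij
  rw [Function.onFun, (hirr i).coprime_iff_not_dvd]
  intro hdvd
  refine (hirr i).not_isUnit (hsq _ ?_)
  calc P i * P i ∣ P i * P j := mul_dvd_mul_left _ hdvd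
    _ = ∏ k ∈ {i, j}, P k := (Finset.prod_pair hij).symm
    _ ∣ ∏ k, P k := Finset.prod_dvd_prod_of_subset _ _ _ (Finset.subset_univ _)

theorem squarefree_X_pow_sub_one_of_coprime {K : Type*} [Field K] [Fintype K] {n : ℕ}
    (hn : n.Coprime (Fintype.card K)) : Squarefree (X ^ n - 1 : K[X]) := by
  have hunit : IsUnit (n : K) := by
    have := (Nat.isCoprime_iff_coprime.mpr hn).map (Int.castRingHom K)
    simpa [Nat.cast_card_eq_zero, isCoprime_zero_right] using this
  simpa using (separable_X_pow_sub_C_unit 1 hunit).squarefree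

section Frobenius

variable (K L : Type*) [Field K] [Fintype K] [Field L] [Algebra K L]

theorem frobeniusAlgHom_toLinearMap_pow_apply (i : ℕ) (x : L) :
    ((frobeniusAlgHom K L).toLinearMap ^ i) x = x ^ Fintype.card K ^ i := by
  rw [← AlgHom.toEnd_apply, ← map_pow, AlgHom.toEnd_apply, AlgHom.toLinearMap_apply,
    AlgHom.coe_pow, coe_frobeniusAlgHom, pow_iterate]

theorem aeval_frobeniusAlgHom_apply (g : K[X]) (x : L) :
    aeval (frobeniusAlgHom K L).toLinearMap g x =
      ∑ i ∈ Finset.range (g.natDegree + 1), g.coeff i • x ^ Fintype.card K ^ i := by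
  simp only [aeval_eq_sum_range, LinearMap.coe_sum, Finset.sum_apply, LinearMap.smul_apply,
    frobeniusAlgHom_toLinearMap_pow_apply]

theorem coe_ker_aeval_frobeniusAlgHom (g : K[X]) :
    (LinearMap.ker (aeval (frobeniusAlgHom K L).toLinearMap g) : Set L) =
      {x | ∑ i ∈ Finset.range (g.natDegree + 1), g.coeff i • x ^ Fintype.card K ^ i = 0} := by
  ext x
  rw [SetLike.mem_coe, LinearMap.mem_ker, aeval_frobeniusAlgHom_apply]
  rfl

theorem aeval_frobeniusAlgHom_X_pow_finrank_sub_one [Finite L] :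
    aeval (frobeniusAlgHom K L).toLinearMap (X ^ finrank K L - 1 : K[X]) = 0 := by
  rw [map_sub, map_pow, aeval_X, map_one, ← AlgHom.toEnd_apply, ← map_pow,
    ← orderOf_frobeniusAlgHom, pow_orderOf_eq_one, map_one, sub_self]

theorem finrank_ker_aeval_frobeniusAlgHom_le [FiniteDimensional K L] {g : K[X]} (hg : g ≠ 0) :
    finrank K (LinearMap.ker (aeval (frobeniusAlgHom K L).toLinearMap g)) ≤ g.natDegree := by
  have hq : 2 ≤ Fintype.card K := Fintype.one_lt_card
  have hsub : (LinearMap.ker (aeval (frobeniusAlgHom K L).toLinearMap g) : Set L) ⊆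
      (linearizedPoly (Fintype.card K) g).rootSet L := fun x hx => by
    rw [mem_rootSet, aeval_linearizedPoly, ← aeval_frobeniusAlgHom_apply]
    exact ⟨linearizedPoly_ne_zero hq hg, hx⟩
  have hcard : Nat.card (LinearMap.ker (aeval (frobeniusAlgHom K L).toLinearMap g)) ≤
      Fintype.card K ^ g.natDegree := by
    rw [← SetLike.coe_sort_coe, Nat.card_coe_set_eq]
    calc _ ≤ _ := Set.ncard_le_ncard hsub
      _ ≤ _ := ncard_rootSet_le _ L
      _ ≤ _ := natDegree_linearizedPoly_le Fintype.card_pos g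
  rw [natCard_eq_pow_finrank (K := K), Nat.card_eq_fintype_card] at hcard
  exact (Nat.pow_le_pow_iff_right hq).mp hcard

end Frobenius

theorem stmt_0_general (K L : Type) [Field K] [Fintype K] [Field L] [Algebra K L]
    (q n r : ℕ) (hq : Fintype.card K = q) (hn : 0 < n)
    (hrank : Module.finrank K L = n) (hcop : Nat.Coprime n q)
    (P : Fin r → Polynomial K)
    (hirr : ∀ l, Irreducible (P l))
    (hprod : ∏ l, P l = X ^ n - 1) :
    ∃ W : Fin r → Submodule K L,
      (∀ l, (W l : Set L) =
        {α : L | ∑ i ∈ Finset.range ((P l).natDegree + 1), (P l).coeff i • α ^ q ^ i = 0}) ∧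
      DirectSum.IsInternal W ∧
      ∀ l, Module.finrank K (W l) = (P l).natDegree := by
  subst hq hrank
  have : FiniteDimensional K L := .of_finrank_pos hn
  have : Finite L := Module.finite_of_finite K
  have hP : Pairwise (IsCoprime on P) :=
    pairwise_isCoprime_of_squarefree_prod hirr (hprod ▸ squarefree_X_pow_sub_one_of_coprime hcop)
  have hW : IsInternal fun l => LinearMap.ker (aeval (frobeniusAlgHom K L).toLinearMap (P l)) :=
    isInternal_ker_aeval_of_pairwise_isCoprime _ hP
      (hprod ▸ aeval_frobeniusAlgHom_X_pow_finrank_sub_one K L)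
  have hdeg : ∑ l, (P l).natDegree = finrank K L := by
    rw [← natDegree_prod _ _ fun l _ => (hirr l).ne_zero, hprod, ← C_1, natDegree_X_pow_sub_C]
  exact ⟨_, fun l => coe_ker_aeval_frobeniusAlgHom K L (P l), hW, hW.finrank_eq_of_le hdeg
    fun l => finrank_ker_aeval_frobeniusAlgHom_le K L (hirr l).ne_zero⟩

/-- Semaev decomposition: with `x^n - 1 = p_1 ⋯ p_r` the factorization into monic
irreducibles over `F_q`, the kernels `W_l` of `p_l(τ)` (τ the Frobenius `α ↦ α^q`)
give an internal direct sum decomposition of `F_{q^n}`, with `dim W_l = deg p_l`. -/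
theorem stmt_0 (K L : Type) [Field K] [Fintype K] [Field L] [Algebra K L]
    (q n r : ℕ) (hq : Fintype.card K = q) (hn : 0 < n)
    (hrank : Module.finrank K L = n) (hcop : Nat.Coprime n q)
    (P : Fin r → Polynomial K)
    (hmonic : ∀ l, (P l).Monic) (hirr : ∀ l, Irreducible (P l))
    (hprod : ∏ l, P l = X ^ n - 1) :
    ∃ W : Fin r → Submodule K L,
      (∀ l, (W l : Set L) =
        {α : L | ∑ i ∈ Finset.range ((P l).natDegree + 1), (P l).coeff i • α ^ q ^ i = 0}) ∧
      DirectSum.IsInternal W ∧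
      ∀ l, Module.finrank K (W l) = (P l).natDegree :=
  stmt_0_general K L q n r hq hn hrank hcop P hirr hprod
end

section
/- Let q be a prime power, n a positive integer with gcd(n,q)=1, and x^n - 1 = p_1 ... p_r the irreducible factorization over F_q. With τ the Frobenius on F_{q^n} and W_l = ker p_l(τ), an element α ∈ F_{q^n} is normal over F_q if and only if, writing α = Σ_l α_l with α_l ∈ W_l, every component α_l is nonzero. -/
/-!
Let `τ` be the Frobenius `x ↦ x ^ q`. The conjugates `α ^ q ^ i`, `i < n`, are linearly
independent iff no nonzero `g` of degree `< n` satisfies `g(τ) α = 0`. Each `W_l` is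
`τ`-stable and the sum is direct, so `g(τ) α = 0` iff `g(τ)` kills every component `α_l`;
as `p_l` is irreducible, this means `α_l = 0` or `p_l ∣ g`. If some `α_l = 0`, then
`∏_{k ≠ l} p_k` is such a `g`. If all `α_l ≠ 0`, the `W_l` are nonzero and independent, which
forces the `p_l` to be pairwise coprime (`p_l ∣ p_k` would give `W_l ≤ W_k`), so
`x ^ n - 1 = ∏ p_l` divides `g`, whence `g = 0`.
-/

open Polynomial Module

section CyclicVector

variable {K V : Type*} [Field K] [AddCommGroup V] [Module K V]

theorem aeval_apply_eq_sum_degreeLTEquiv (f : Module.End K V) (v : V) {n : ℕ} {p : K[X]}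
    (hp : p ∈ degreeLT K n) :
    aeval f p v = ∑ i, degreeLTEquiv K n ⟨p, hp⟩ i • (f ^ (i : ℕ)) v := by
  rw [aeval_endomorphism]
  exact (sum_fin _ (by simp) (mem_degreeLT.mp hp)).symm

theorem linearIndependent_pow_apply_iff (f : Module.End K V) (v : V) (n : ℕ) :
    LinearIndependent K (fun i : Fin n ↦ (f ^ (i : ℕ)) v) ↔
      ∀ p ∈ degreeLT K n, aeval f p v = 0 → p = 0 := by
  rw [Fintype.linearIndependent_iff]
  constructor
  · intro h p hp hpv
    rw [← degreeLTEquiv_eq_zero_iff_eq_zero hp]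
    exact funext <| h _ (by rw [← aeval_apply_eq_sum_degreeLTEquiv f v hp, hpv])
  · intro h c hc i
    obtain ⟨⟨p, hp⟩, rfl⟩ := (degreeLTEquiv K n).surjective c
    have hp0 : p = 0 := h p hp (by rw [aeval_apply_eq_sum_degreeLTEquiv f v hp, hc])
    subst hp0
    exact coeff_zero (i : ℕ)

theorem exists_basis_apply_eq_iff_linearIndependent {ι : Type*} [Fintype ι] [Nonempty ι]
    (b : ι → V) (hcard : Fintype.card ι = finrank K V) :
    (∃ bas : Basis ι K V, ∀ i, bas i = b i) ↔ LinearIndependent K b := by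
  refine ⟨fun ⟨bas, hbas⟩ ↦ funext hbas ▸ bas.linearIndependent, fun hli ↦ ?_⟩
  exact ⟨basisOfLinearIndependentOfCardEqFinrank hli hcard, by simp⟩

end CyclicVector

theorem FiniteField.frobeniusAlgHom_pow_apply (K L : Type*) [Field K] [Fintype K] [CommRing L]
    [Algebra K L] (i : ℕ) (x : L) :
    ((frobeniusAlgHom K L).toLinearMap ^ i) x = x ^ Fintype.card K ^ i := by
  rw [Module.End.pow_apply, AlgHom.coe_toLinearMap, FiniteField.coe_frobeniusAlgHom, pow_iterate]

section KernelDecomposition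

variable {K V ι : Type*} [Field K] [AddCommGroup V] [Module K V] (f : Module.End K V)

theorem ker_aeval_le_ker_aeval_of_dvd {p q : K[X]} (h : p ∣ q) :
    LinearMap.ker (aeval f p) ≤ LinearMap.ker (aeval f q) := by
  obtain ⟨c, rfl⟩ := h
  exact le_sup_left.trans sup_ker_aeval_le_ker_aeval_mul

theorem aeval_apply_mem_ker_aeval (g : K[X]) {p : K[X]} {v : V}
    (hv : v ∈ LinearMap.ker (aeval f p)) : aeval f g v ∈ LinearMap.ker (aeval f p) := by
  rw [LinearMap.mem_ker, ← Module.End.mul_apply, ← map_mul, mul_comm, map_mul,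
    Module.End.mul_apply, LinearMap.mem_ker.mp hv, map_zero]

variable {P : ι → K[X]}

theorem pairwise_isCoprime_of_ker_aeval_ne_bot (hP : ∀ l, Irreducible (P l))
    (hind : iSupIndep fun l ↦ LinearMap.ker (aeval f (P l)))
    (hne : ∀ l, LinearMap.ker (aeval f (P l)) ≠ ⊥) :
    Pairwise fun l l' ↦ IsCoprime (P l) (P l') := by
  intro l l' hll'
  refine (hP l).coprime_iff_not_dvd.mpr fun hdvd ↦ hne l ?_
  exact (hind.pairwiseDisjoint hll').eq_bot_of_le (ker_aeval_le_ker_aeval_of_dvd f hdvd)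

variable [Fintype ι]

theorem aeval_apply_sum_eq_zero_iff (hP : ∀ l, Irreducible (P l))
    (hind : iSupIndep fun l ↦ LinearMap.ker (aeval f (P l))) {comp : ι → V}
    (hcomp : ∀ l, comp l ∈ LinearMap.ker (aeval f (P l))) (g : K[X]) :
    aeval f g (∑ l, comp l) = 0 ↔ ∀ l, comp l = 0 ∨ P l ∣ g := by
  classical
  constructor
  · intro hg l
    refine or_iff_not_imp_right.mpr fun hndvd ↦ ?_
    have hgl : aeval f g (comp l) = 0 :=
      (iSupIndep_iff_finsetSum_eq_zero_imp_eq_zero _).mp hind Finset.univ _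
        (fun l _ ↦ aeval_apply_mem_ker_aeval f g (hcomp l)) (by rw [← map_sum, hg]) l
        (Finset.mem_univ l)
    have hdisj := disjoint_ker_aeval_of_isCoprime f ((hP l).coprime_iff_not_dvd.mpr hndvd)
    exact (Submodule.disjoint_def.mp hdisj) _ (hcomp l) hgl
  · intro h
    rw [map_sum]
    refine Finset.sum_eq_zero fun l _ ↦ ?_
    obtain h0 | hdvd := h l
    · rw [h0, map_zero]
    · exact ker_aeval_le_ker_aeval_of_dvd f hdvd (hcomp l)

theorem degree_lt_aeval_apply_sum_eq_zero_imp_iff (hP : ∀ l, Irreducible (P l))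
    (hind : iSupIndep fun l ↦ LinearMap.ker (aeval f (P l))) {comp : ι → V}
    (hcomp : ∀ l, comp l ∈ LinearMap.ker (aeval f (P l))) :
    (∀ g : K[X], g.degree < (∏ l, P l).degree → aeval f g (∑ l, comp l) = 0 → g = 0) ↔
      ∀ l, comp l ≠ 0 := by
  classical
  have hPne l : P l ≠ 0 := (hP l).ne_zero
  constructor
  · intro h l hl
    have hdeg : (∏ l' ∈ Finset.univ.erase l, P l').degree < (∏ l, P l).degree := by
      rw [← Finset.mul_prod_erase _ _ (Finset.mem_univ l), ← natDegree_lt_natDegree_iff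
        (Finset.prod_ne_zero_iff.mpr fun l' _ ↦ hPne l'), natDegree_mul (hPne l)
        (Finset.prod_ne_zero_iff.mpr fun l' _ ↦ hPne l')]
      have := (hP l).natDegree_pos
      omega
    refine Finset.prod_ne_zero_iff.mpr (fun l' _ ↦ hPne l') (h _ hdeg ?_)
    refine (aeval_apply_sum_eq_zero_iff f hP hind hcomp _).mpr fun l' ↦ ?_
    by_cases hl' : l' = l
    · exact .inl (hl' ▸ hl)
    · exact .inr (Finset.dvd_prod_of_mem _ (Finset.mem_erase.mpr ⟨hl', Finset.mem_univ l'⟩))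
  · intro hne g hdeg hg
    have hdvd l : P l ∣ g :=
      ((aeval_apply_sum_eq_zero_iff f hP hind hcomp g).mp hg l).resolve_left (hne l)
    have hcop := pairwise_isCoprime_of_ker_aeval_ne_bot f hP hind fun l hbot ↦
      hne l ((Submodule.eq_bot_iff _).mp hbot _ (hcomp l))
    exact eq_zero_of_dvd_of_degree_lt (Fintype.prod_dvd_of_coprime hcop hdvd) hdeg

end KernelDecomposition

theorem stmt_1_general (K L : Type) [Field K] [Fintype K] [Field L] [Algebra K L]
    (q n r : ℕ) (hq : Fintype.card K = q) (hn : 0 < n)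
    (hrank : Module.finrank K L = n)
    (P : Fin r → Polynomial K)
    (hirr : ∀ l, Irreducible (P l))
    (hprod : ∏ l, P l = X ^ n - 1)
    (W : Fin r → Submodule K L)
    (hW : ∀ l, (W l : Set L) =
      {α : L | ∑ i ∈ Finset.range ((P l).natDegree + 1), (P l).coeff i • α ^ q ^ i = 0})
    (hint : DirectSum.IsInternal W)
    (α : L) (comp : Fin r → L) (hcomp : ∀ l, comp l ∈ W l) (hsum : ∑ l, comp l = α) :
    (∃ bas : Basis (Fin n) K L, ∀ i : Fin n, bas i = α ^ q ^ (i : ℕ)) ↔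
      ∀ l, comp l ≠ 0 := by
  set τ := (FiniteField.frobeniusAlgHom K L).toLinearMap
  have hτ (i : ℕ) (x : L) : (τ ^ i) x = x ^ q ^ i :=
    hq ▸ FiniteField.frobeniusAlgHom_pow_apply K L i x
  obtain rfl : W = fun l ↦ LinearMap.ker (aeval τ (P l)) := by
    funext l
    refine SetLike.coe_injective ((hW l).trans (Set.ext fun x ↦ ?_))
    simp [aeval_eq_sum_range, LinearMap.sum_apply, hτ]
  have hdeg : (∏ l, P l).degree = n := by rw [hprod, ← C_1, degree_X_pow_sub_C hn]
  have : Nonempty (Fin n) := Fin.pos_iff_nonempty.mp hn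
  simp_rw [← hτ]
  rw [exists_basis_apply_eq_iff_linearIndependent _ (by rw [Fintype.card_fin, hrank]),
    linearIndependent_pow_apply_iff, ← degree_lt_aeval_apply_sum_eq_zero_imp_iff τ hirr
      hint.submodule_iSupIndep hcomp, hsum, hdeg]
  simp only [mem_degreeLT]

/-- Semaev criterion: with `x^n - 1 = p_1 ⋯ p_r` the irreducible factorization over `F_q`,
`τ` the Frobenius and `W_l = ker p_l(τ)`, an element `α = Σ α_l` (with `α_l ∈ W_l`) is
normal over `F_q` iff every component `α_l` is nonzero. -/
theorem stmt_1 (K L : Type) [Field K] [Fintype K] [Field L] [Algebra K L]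
    (q n r : ℕ) (hq : Fintype.card K = q) (hn : 0 < n)
    (hrank : Module.finrank K L = n) (hcop : Nat.Coprime n q)
    (P : Fin r → Polynomial K)
    (hmonic : ∀ l, (P l).Monic) (hirr : ∀ l, Irreducible (P l))
    (hprod : ∏ l, P l = X ^ n - 1)
    (W : Fin r → Submodule K L)
    (hW : ∀ l, (W l : Set L) =
      {α : L | ∑ i ∈ Finset.range ((P l).natDegree + 1), (P l).coeff i • α ^ q ^ i = 0})
    (hint : DirectSum.IsInternal W)
    (α : L) (comp : Fin r → L) (hcomp : ∀ l, comp l ∈ W l) (hsum : ∑ l, comp l = α) :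
    (∃ bas : Basis (Fin n) K L, ∀ i : Fin n, bas i = α ^ q ^ (i : ℕ)) ↔
      ∀ l, comp l ≠ 0 :=
  stmt_1_general K L q n r hq hn hrank P hirr hprod W hW hint α comp hcomp hsum
end

section
/- Let A ∈ F_q^* have multiplicative order e, and let t ≥ 1. The polynomial x^t - A is irreducible over F_q if and only if: (i) gcd(t, (q-1)/e) = 1; (ii) every prime factor of t divides e; and (iii) if 4 | t then 4 | q - 1. -/
open Polynomial IntermediateField Finset

/-!
Since `𝔽_qˣ` is cyclic of order `q - 1`, an element `A` of order `e` fails to be an `ℓ`-th power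
(`ℓ` prime) exactly when `ℓ ∣ e` and `ℓ ∤ (q - 1) / e`; so (i) and (ii) say that `A` is not an
`ℓ`-th power for any prime `ℓ ∣ t`.

Necessity: an irreducible `X ^ t - A` has no such roots, and if `4 ∣ t` but `q ≡ 3 mod 4`, the
nonsquare `A` has the form `-4 b ^ 4`, so Sophie Germain's identity
`X ^ 4 + 4 b ^ 4 = (X ^ 2 - 2 b X + 2 b ^ 2) (X ^ 2 + 2 b X + 2 b ^ 2)` factors `X ^ t - A`.

Sufficiency, by induction on `t = p s`: `X ^ p - A` is irreducible, and a root `α` of it generates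
`𝔽_{q^p}` and has order `p e`. The conditions pass to `(q ^ p, p e, s)` because
`(q ^ p - 1) / (q - 1) = 1 + q + ⋯ + q ^ (p - 1)` is divisible by a prime `ℓ ∣ q - 1` only if
`ℓ = p`, and then only once (for `p = 2` this needs `4 ∣ q - 1`). Capelli's lemma
`X_pow_mul_sub_C_irreducible` then gives the irreducibility of `X ^ (p s) - A`.
-/

lemma orderOf_eq_mul_orderOf_of_pow_eq {M : Type*} [Monoid M] {x y : M} {p : ℕ}
    (hp : p.Prime) (hxy : x ^ p = y) (hdvd : p ∣ orderOf y) : orderOf x = p * orderOf y := by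
  subst hxy
  rw [orderOf_pow' x hp.ne_zero] at hdvd ⊢
  have hpx : p ∣ orderOf x := hdvd.trans (Nat.div_dvd_of_dvd (Nat.gcd_dvd_left _ _))
  rw [Nat.gcd_eq_right hpx, Nat.mul_div_cancel' hpx]

lemma orderOf_dvd_natCard_sub_one {G₀ : Type*} [GroupWithZero G₀] {a : G₀} (ha : a ≠ 0) :
    orderOf a ∣ Nat.card G₀ - 1 := by
  rw [← Nat.card_units, ← Units.val_mk0 ha, orderOf_units]
  exact orderOf_dvd_natCard _

lemma IsCyclic.forall_pow_ne_iff {G : Type*} [Group G] [Finite G] [IsCyclic G] {ℓ : ℕ}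
    (hℓ : ℓ.Prime) (x : G) :
    (∀ y : G, y ^ ℓ ≠ x) ↔ ℓ ∣ orderOf x ∧ ¬ ℓ ∣ Nat.card G / orderOf x := by
  obtain ⟨m, hm⟩ := orderOf_dvd_natCard x
  rw [hm, Nat.mul_div_cancel_left _ (orderOf_pos x)]
  constructor
  · intro hno
    by_contra! hroot
    by_cases hℓm : ℓ ∣ m
    · -- writing `x = g ^ k` for a generator `g`, the index `m` is `gcd (card G) k`
      obtain ⟨g, hg⟩ := IsCyclic.exists_monoid_generator (α := G)
      obtain ⟨k, rfl⟩ := hg x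
      have hgk : orderOf (g ^ k) * (Nat.card G).gcd k = Nat.card G := by
        rw [(isOfFinOrder_of_finite g).orderOf_pow, orderOf_eq_card_of_forall_mem_powers hg]
        exact Nat.div_mul_cancel (Nat.gcd_dvd_left _ _)
      have hgcd : (Nat.card G).gcd k = m :=
        Nat.eq_of_mul_eq_mul_left (orderOf_pos _) (hgk.trans hm)
      obtain ⟨j, rfl⟩ := hℓm.trans (hgcd ▸ Nat.gcd_dvd_right _ k)
      exact hno (g ^ j) (by rw [← pow_mul, mul_comm])
    · have hcop : (Nat.card G).Coprime ℓ := by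
        rw [Nat.coprime_comm, hℓ.coprime_iff_not_dvd, hm]
        exact fun h => (hℓ.dvd_mul.mp h).elim (fun h => hℓm (hroot h)) hℓm
      exact hno _ ((powCoprime hcop).apply_symm_apply x)
  · rintro ⟨hℓx, hℓm⟩ y rfl
    have hy := orderOf_dvd_natCard y
    rw [orderOf_eq_mul_orderOf_of_pow_eq hℓ rfl hℓx, hm, mul_comm] at hy
    exact hℓm (Nat.dvd_of_mul_dvd_mul_left (orderOf_pos _) hy)

namespace FiniteField

variable {K : Type*} [Field K] [Finite K]

lemma forall_pow_ne_iff {ℓ : ℕ} (hℓ : ℓ.Prime) {a : K} (ha : a ≠ 0) :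
    (∀ b : K, b ^ ℓ ≠ a) ↔ ℓ ∣ orderOf a ∧ ¬ ℓ ∣ (Nat.card K - 1) / orderOf a := by
  have hunits : (∀ b : K, b ^ ℓ ≠ a) ↔ ∀ u : Kˣ, u ^ ℓ ≠ Units.mk0 a ha := by
    refine ⟨fun h u hu => h u (by simpa using congrArg Units.val hu), fun h b hb => ?_⟩
    have hb0 : b ≠ 0 := by rintro rfl; exact ha (by simpa [hℓ.ne_zero] using hb.symm)
    exact h (Units.mk0 b hb0) (Units.ext (by simpa using hb))
  rw [hunits, IsCyclic.forall_pow_ne_iff hℓ, ← orderOf_units, Units.val_mk0, Nat.card_units]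

lemma isSquare_mul_of_not_isSquare {a b : K} (ha : ¬IsSquare a) (hb : ¬IsSquare b) :
    IsSquare (a * b) := by
  classical
  have := Fintype.ofFinite K
  have ha0 : a ≠ 0 := by rintro rfl; exact ha IsSquare.zero
  have hb0 : b ≠ 0 := by rintro rfl; exact hb IsSquare.zero
  rw [← quadraticChar_one_iff_isSquare (mul_ne_zero ha0 hb0), map_mul,
    quadraticChar_neg_one_iff_not_isSquare.mpr ha, quadraticChar_neg_one_iff_not_isSquare.mpr hb]
  norm_num

lemma exists_eq_neg_four_mul_pow_four (hq : ¬ 4 ∣ Nat.card K - 1) {a : K} (ha : ¬IsSquare a) :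
    ∃ b : K, a = -4 * b ^ 4 := by
  have := Fintype.ofFinite K
  have hchar : ringChar K ≠ 2 := fun h => ha (isSquare_of_char_two h a)
  have hodd := odd_card_of_char_ne_two hchar
  have hneg : ¬IsSquare (-1 : K) := by
    rw [isSquare_neg_one_iff, not_not, ← Nat.card_eq_fintype_card]
    rw [← Nat.card_eq_fintype_card] at hodd
    omega
  obtain ⟨c, hc⟩ := isSquare_mul_of_not_isSquare hneg ha
  -- one of `c / 2` and `-(c / 2)` is a square, as `-1` is not
  obtain ⟨f, hf⟩ : ∃ f : K, (c / 2) ^ 2 = f ^ 4 := by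
    by_cases hsq : IsSquare (c / 2)
    · obtain ⟨f, hf⟩ := hsq
      exact ⟨f, by rw [hf]; ring⟩
    · obtain ⟨f, hf⟩ := isSquare_mul_of_not_isSquare hneg hsq
      exact ⟨f, by linear_combination (f * f - c / 2) * hf⟩
  have h2 : (2 : K) ≠ 0 := Ring.two_ne_zero hchar
  refine ⟨f, ?_⟩
  rw [← hf]
  field_simp
  linear_combination -4 * hc

end FiniteField

lemma not_irreducible_X_pow_four_sub_C_neg_four_mul_pow_four {R : Type*} [CommRing R]
    [IsDomain R] (b : R) : ¬ Irreducible (X ^ 4 - C (-4 * b ^ 4) : R[X]) := by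
  have hfac : (X ^ 4 - C (-4 * b ^ 4) : R[X]) =
      (X ^ 2 - 2 * X * C b + 2 * C b ^ 2) * (X ^ 2 + 2 * X * C b + 2 * C b ^ 2) := by
    rw [← pow_four_add_four_mul_pow_four']
    simp only [map_mul, map_neg, map_pow, map_ofNat]
    ring
  have hdeg₁ : (X ^ 2 - 2 * X * C b + 2 * C b ^ 2 : R[X]).natDegree = 2 := by compute_degree!
  have hdeg₂ : (X ^ 2 + 2 * X * C b + 2 * C b ^ 2 : R[X]).natDegree = 2 := by compute_degree!
  intro H
  rcases H.isUnit_or_isUnit hfac with h | h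
  · simp [natDegree_eq_zero_of_isUnit h] at hdeg₁
  · simp [natDegree_eq_zero_of_isUnit h] at hdeg₂

lemma not_irreducible_X_pow_sub_C_neg_four_mul_pow_four {R : Type*} [CommRing R] [IsDomain R]
    {n : ℕ} (hn : n ≠ 0) (h4 : 4 ∣ n) (b : R) : ¬ Irreducible (X ^ n - C (-4 * b ^ 4) : R[X]) := by
  obtain ⟨u, rfl⟩ := h4
  refine fun H => not_irreducible_X_pow_four_sub_C_neg_four_mul_pow_four b
    (of_irreducible_expand (right_ne_zero_of_mul hn) ?_)
  simpa [pow_mul'] using H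

lemma four_dvd_natCard_sub_one_of_irreducible {K : Type*} [Field K] [Finite K] {t : ℕ}
    (ht : t ≠ 0) (h4 : 4 ∣ t) {a : K} (H : Irreducible (X ^ t - C a)) : 4 ∣ Nat.card K - 1 := by
  by_contra hq
  have hsq : ¬IsSquare a := by
    rintro ⟨b, rfl⟩
    exact pow_ne_of_irreducible_X_pow_sub_C H ((dvd_mul_right 2 2).trans h4) (by norm_num) b (sq b)
  obtain ⟨b, rfl⟩ := FiniteField.exists_eq_neg_four_mul_pow_four hq hsq
  exact not_irreducible_X_pow_sub_C_neg_four_mul_pow_four ht h4 b H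

namespace Nat

lemma not_dvd_geom_sum_of_ne {q ℓ p : ℕ} (hℓ : ℓ.Prime) (hp : p.Prime) (hℓp : ℓ ≠ p)
    (hq : 1 ≤ q) (hℓq : ℓ ∣ q - 1) : ¬ ℓ ∣ ∑ i ∈ range p, q ^ i := by
  have hℓq' : (ℓ : ℤ) ∣ (q : ℤ) - 1 := by exact_mod_cast Int.natCast_dvd_natCast.mpr hℓq
  have hℓZ := Nat.prime_iff_prime_int.mp hℓ
  have hnot := not_dvd_geom_sum₂ (n := p) hℓZ hℓq'
    (fun h => hℓZ.not_dvd_one ((dvd_iff_dvd_of_dvd_sub hℓq').mp h))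
    (by exact_mod_cast (Nat.prime_dvd_prime_iff_eq hℓ hp).not.mpr hℓp)
  simp only [one_pow, mul_one] at hnot
  exact_mod_cast hnot

lemma not_sq_dvd_geom_sum {q p : ℕ} (hp : p.Prime) (hq : 1 ≤ q) (hpq : p ∣ q - 1)
    (h2 : p = 2 → 4 ∣ q - 1) : ¬ p ^ 2 ∣ ∑ i ∈ range p, q ^ i := by
  rcases hp.eq_two_or_odd' with rfl | hodd
  · have := h2 rfl
    simp only [sum_range_succ, sum_range_zero, pow_zero, pow_one, zero_add]
    omega
  have hpq' : (p : ℤ) ∣ (q : ℤ) - 1 := by exact_mod_cast Int.natCast_dvd_natCast.mpr hpq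
  have hpZ := Nat.prime_iff_prime_int.mp hp
  have hmult := emultiplicity_geom_sum₂_eq_one hpZ hodd hpq'
    (fun h => hpZ.not_dvd_one ((dvd_iff_dvd_of_dvd_sub hpq').mp h))
  simp only [one_pow, mul_one] at hmult
  intro h
  have := pow_dvd_iff_le_emultiplicity.mp
    (by exact_mod_cast h : (p : ℤ) ^ 2 ∣ ∑ i ∈ range p, (q : ℤ) ^ i)
  rw [hmult] at this
  norm_num at this

lemma not_dvd_pow_sub_one_div {q ℓ p e : ℕ} (hℓ : ℓ.Prime) (hp : p.Prime) (hq : 1 ≤ q)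
    (he : e ∣ q - 1) (hℓe : ℓ ∣ e) (hℓm : ¬ ℓ ∣ (q - 1) / e) (hpe : p * e ∣ q ^ p - 1)
    (h4 : ℓ = 2 → p = 2 → 4 ∣ q - 1) : ¬ ℓ ∣ (q ^ p - 1) / (p * e) := by
  obtain ⟨m, hm⟩ := he
  have he0 : e ≠ 0 := by rintro rfl; simp at hℓm
  rw [hm, Nat.mul_div_cancel_left _ (Nat.pos_of_ne_zero he0)] at hℓm
  rintro ⟨k, hk⟩
  set S := ∑ i ∈ range p, q ^ i
  have hSm : m * S = ℓ * (p * k) := by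
    refine Nat.eq_of_mul_eq_mul_left (Nat.pos_of_ne_zero he0) ?_
    calc e * (m * S) = S * (q - 1) := by rw [hm]; ring
      _ = q ^ p - 1 := geom_sum_mul_of_one_le hq p
      _ = p * e * (ℓ * k) := by rw [← hk, Nat.mul_div_cancel' hpe]
      _ = e * (ℓ * (p * k)) := by ring
  have hℓq : ℓ ∣ q - 1 := hℓe.trans ⟨m, hm⟩
  by_cases hℓp : ℓ = p
  · subst hℓp
    refine not_sq_dvd_geom_sum hℓ hq hℓq (fun h => h4 h h) ?_
    exact (Nat.Coprime.pow_left 2 (hℓ.coprime_iff_not_dvd.mpr hℓm)).dvd_of_dvd_mul_left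
      ⟨k, by rw [hSm]; ring⟩
  · exact not_dvd_geom_sum_of_ne hℓ hp hℓp hq hℓq
      ((hℓ.dvd_mul.mp ⟨p * k, hSm⟩).resolve_left hℓm)

end Nat

section AdjoinRoot

variable {K L : Type*} [Field K] [Field L] [Algebra K L] {n : ℕ} {a : K} {x : L}

lemma gen_pow_eq_of_minpoly_eq_X_pow_sub_C (hx : minpoly K x = X ^ n - C a) :
    AdjoinSimple.gen K x ^ n = algebraMap K K⟮x⟯ a := by
  apply (algebraMap K⟮x⟯ L).injective
  have h0 := minpoly.aeval K x
  rw [hx, map_sub, map_pow, aeval_X, aeval_C, sub_eq_zero] at h0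
  rw [map_pow, AdjoinSimple.algebraMap_gen, h0, ← IsScalarTower.algebraMap_apply]

lemma natCard_adjoin_of_minpoly_eq_X_pow_sub_C [Finite K] (hn : n ≠ 0)
    (hx : minpoly K x = X ^ n - C a) : Nat.card K⟮x⟯ = Nat.card K ^ n := by
  have hint : IsIntegral K x :=
    minpoly.ne_zero_iff.mp (hx ▸ X_pow_sub_C_ne_zero (Nat.pos_of_ne_zero hn) a)
  have := adjoin.finiteDimensional hint
  rw [Module.natCard_eq_pow_finrank (K := K), adjoin.finrank hint, hx, natDegree_X_pow_sub_C]

lemma forall_pow_ne_gen_of_minpoly_eq_X_pow_sub_C [Finite K] [Finite K⟮x⟯] {p s : ℕ} (hp : p.Prime)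
    (hx : minpoly K x = X ^ p - C a) (ha : ∀ ℓ : ℕ, ℓ.Prime → ℓ ∣ p * s → ∀ b : K, b ^ ℓ ≠ a)
    (h4 : 4 ∣ p * s → 4 ∣ Nat.card K - 1) {ℓ : ℕ} (hℓ : ℓ.Prime) (hℓs : ℓ ∣ s) :
    ∀ y : K⟮x⟯, y ^ ℓ ≠ AdjoinSimple.gen K x := by
  have ha0 : a ≠ 0 := fun h => ha p hp (dvd_mul_right p s) 0 (by rw [h, zero_pow hp.ne_zero])
  have hcritA : ∀ r : ℕ, r.Prime → r ∣ p * s →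
      r ∣ orderOf a ∧ ¬ r ∣ (Nat.card K - 1) / orderOf a :=
    fun r hr hrt => (FiniteField.forall_pow_ne_iff hr ha0).mp (ha r hr hrt)
  have hαp := gen_pow_eq_of_minpoly_eq_X_pow_sub_C hx
  have hordA : orderOf (algebraMap K K⟮x⟯ a) = orderOf a :=
    orderOf_injective (algebraMap K K⟮x⟯).toMonoidHom (algebraMap K K⟮x⟯).injective a
  have hα0 : AdjoinSimple.gen K x ≠ 0 := by
    intro h
    rw [h, zero_pow hp.ne_zero, eq_comm, map_eq_zero] at hαp
    exact ha0 hαp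
  have hordα : orderOf (AdjoinSimple.gen K x) = p * orderOf a := by
    rw [orderOf_eq_mul_orderOf_of_pow_eq hp hαp (hordA ▸ (hcritA p hp (dvd_mul_right p s)).1),
      hordA]
  have hcard := natCard_adjoin_of_minpoly_eq_X_pow_sub_C hp.ne_zero hx
  have hℓt : ℓ ∣ p * s := dvd_mul_of_dvd_right hℓs p
  rw [FiniteField.forall_pow_ne_iff hℓ hα0, hordα, hcard]
  refine ⟨dvd_mul_of_dvd_right (hcritA ℓ hℓ hℓt).1 p,
    Nat.not_dvd_pow_sub_one_div hℓ hp Nat.card_pos (orderOf_dvd_natCard_sub_one ha0)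
      (hcritA ℓ hℓ hℓt).1 (hcritA ℓ hℓ hℓt).2 ?_ ?_⟩
  · rw [← hordα, ← hcard]
    exact orderOf_dvd_natCard_sub_one hα0
  · rintro rfl rfl
    exact h4 (mul_dvd_mul_left 2 hℓs)

end AdjoinRoot

theorem X_pow_sub_C_irreducible_of_forall_prime {K : Type*} [Field K] [Finite K] {t : ℕ}
    (ht : t ≠ 0) {a : K} (ha : ∀ ℓ : ℕ, ℓ.Prime → ℓ ∣ t → ∀ b : K, b ^ ℓ ≠ a)
    (h4 : 4 ∣ t → 4 ∣ Nat.card K - 1) : Irreducible (X ^ t - C a) := by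
  induction t using induction_on_primes generalizing K a with
  | zero => exact absurd rfl ht
  | one => simpa using irreducible_X_sub_C a
  | prime_mul p s hp IH =>
    rw [mul_comm]
    refine X_pow_mul_sub_C_irreducible
      (X_pow_sub_C_irreducible_of_prime hp (ha p hp (dvd_mul_right p s))) fun L _ _ x hx => ?_
    have hcard := natCard_adjoin_of_minpoly_eq_X_pow_sub_C hp.ne_zero hx
    have : Finite K⟮x⟯ := Nat.finite_of_card_ne_zero (hcard ▸ pow_ne_zero _ Nat.card_pos.ne')
    refine IH (right_ne_zero_of_mul ht)
      (fun ℓ hℓ hℓs => forall_pow_ne_gen_of_minpoly_eq_X_pow_sub_C hp hx ha h4 hℓ hℓs) fun h4s => ?_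
    rw [hcard]
    simpa using (h4 (dvd_mul_of_dvd_right h4s p)).trans (Nat.sub_dvd_pow_sub_pow _ 1 p)

/-- Binomial irreducibility criterion: for `A ∈ F_q^*` of multiplicative order `e` and
`t ≥ 1`, the polynomial `x^t - A` is irreducible over `F_q` iff `gcd(t, (q-1)/e) = 1`,
every prime factor of `t` divides `e`, and `4 ∣ t → 4 ∣ q - 1`. -/
theorem stmt_14 (K : Type) [Field K] [Fintype K] (q : ℕ) (hq : Fintype.card K = q)
    (A : K) (hA : A ≠ 0) (e t : ℕ) (he : orderOf A = e) (ht : 1 ≤ t) :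
    Irreducible ((X : Polynomial K) ^ t - C A) ↔
      (Nat.Coprime t ((q - 1) / e) ∧ (∀ ℓ : ℕ, ℓ.Prime → ℓ ∣ t → ℓ ∣ e) ∧
        (4 ∣ t → 4 ∣ q - 1)) := by
  subst hq he
  rw [← Nat.card_eq_fintype_card]
  have ht0 : t ≠ 0 := Nat.one_le_iff_ne_zero.mp ht
  have hcoprime : Nat.Coprime t ((Nat.card K - 1) / orderOf A) ↔
      ∀ ℓ : ℕ, ℓ.Prime → ℓ ∣ t → ¬ ℓ ∣ (Nat.card K - 1) / orderOf A := by
    rw [← not_iff_not, Nat.Prime.not_coprime_iff_dvd]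
    simp only [not_forall, not_not, exists_prop]
  rw [hcoprime]
  constructor
  · intro H
    have hroot ℓ (hℓ : ℓ.Prime) (hℓt : ℓ ∣ t) :=
      (FiniteField.forall_pow_ne_iff hℓ hA).mp (pow_ne_of_irreducible_X_pow_sub_C H hℓt hℓ.ne_one)
    exact ⟨fun ℓ hℓ hℓt => (hroot ℓ hℓ hℓt).2, fun ℓ hℓ hℓt => (hroot ℓ hℓ hℓt).1,
      fun h4 => four_dvd_natCard_sub_one_of_irreducible ht0 h4 H⟩
  · rintro ⟨hcop, hdvd, h4⟩
    exact X_pow_sub_C_irreducible_of_forall_prime ht0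
      (fun ℓ hℓ hℓt => (FiniteField.forall_pow_ne_iff hℓ hA).mpr ⟨hdvd ℓ hℓ hℓt, hcop ℓ hℓ hℓt⟩) h4
end
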